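/- arXiv:1504.05252 — 4 statements merged into one kernel-verified Lean document; each statement's English description precedes it below -/
import Mathlib

section
/- Let G be a graph consisting of a cycle with edges e₁, e₂, …, eₙ (in cyclic order) together with one additional pendant edge f incident exactly to the vertex of the cycle shared by e₁ and eₙ. Suppose each edge of G is assigned a list of colours of size at least 2, and the list of e₁ has size at least 3. Then G has a proper edge colouring in which every edge receives a colour from its list. -/
/-- A proper edge colouring of `G` from the lists `L`: every edge of `G` receives a colour
from its list, and edges sharing a vertex receive distinct colours. -/
def IsListEdgeColoring {V : Type*} (G : SimpleGraph V) (L : Sym2 V → Finset ℕ)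
    (C : Sym2 V → ℕ) : Prop :=
  (∀ e ∈ G.edgeSet, C e ∈ L e) ∧
  ∀ e ∈ G.edgeSet, ∀ f ∈ G.edgeSet, e ≠ f → (∃ v, v ∈ e ∧ v ∈ f) → C e ≠ C f

/-- The graph consisting of a cycle on `ZMod n` (vertices `Sum.inl i`, edges between `i`
and `i+1`) plus a pendant edge `f` from an extra vertex `Sum.inr ()` to the vertex `0`,
the common endpoint of the edges `e₁ = s(0,1)` and `eₙ = s(n-1,0)`. -/
def cyclePendant (n : ℕ) : SimpleGraph (ZMod n ⊕ Unit) :=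
  SimpleGraph.fromRel (fun a b =>
    match a, b with
    | Sum.inl i, Sum.inl j => j = i + 1
    | Sum.inl i, Sum.inr _ => i = 0
    | _, _ => False)

/-!
Colour `e₂, …, eₙ` greedily along the path, starting from a colour `y` of `e₂`; call `q` the
colour this gives to `eₙ`. It remains to colour `f` avoiding `q`, and `e₁` avoiding `q`, `y` and
the colour of `f`. For a fixed `y` this fails, whatever `q` is, only when
`L(e₁) \ L(f) = {y}`, so one of the two colours available for `e₂` always works.
-/

open Finset Function Sum

section ListChoice

variable {α : Type*}

theorem Finset.sdiff_eq_singleton_of_forall_subset [DecidableEq α] {A F : Finset α}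
    (hA : 2 < #A) (hF : 1 < #F) {q y : α} (h : ∀ cf ∈ F, cf ≠ q → A ⊆ {cf, q, y}) :
    A \ F = {y} := by
  have not_subset_pair (a b : α) : ¬A ⊆ {a, b} := fun hs ↦
    ((card_le_card hs).trans card_le_two).not_gt hA
  obtain ⟨cf, hcf, hcfq⟩ := exists_mem_ne hF q
  have hyA : y ∈ A := by
    by_contra hyA
    exact not_subset_pair cf q fun c hc ↦ by grind [h cf hcf hcfq hc]
  have hyF : y ∉ F := by
    intro hyF
    by_cases hyq : y = q
    · exact not_subset_pair cf q fun c hc ↦ by grind [h cf hcf hcfq hc]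
    · exact not_subset_pair y q fun c hc ↦ by grind [h y hyF hyq hc]
  refine eq_singleton_iff_unique_mem.2 ⟨mem_sdiff.2 ⟨hyA, hyF⟩, fun x hx ↦ ?_⟩
  obtain ⟨hxA, hxF⟩ := mem_sdiff.1 hx
  by_cases hxq : x = q
  · subst hxq
    obtain ⟨cf', hcf', hne⟩ := exists_mem_ne hF cf
    refine (not_subset_pair x y fun c hc ↦ ?_).elim
    grind [h cf hcf hcfq hc, h cf' hcf' (by grind) hc]
  · grind [h cf hcf hcfq hxA]

theorem Finset.exists_mem_forall_exists_mem_ne [DecidableEq α] {A F B : Finset α}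
    (hA : 2 < #A) (hF : 1 < #F) (hB : 1 < #B) :
    ∃ y ∈ B, ∀ q, ∃ cf ∈ F, cf ≠ q ∧ ∃ c ∈ A, c ≠ cf ∧ c ≠ q ∧ c ≠ y := by
  obtain ⟨y, hy, hAF⟩ : ∃ y ∈ B, A \ F ≠ {y} := by
    obtain ⟨a, ha, b, hb, hab⟩ := one_lt_card.1 hB
    by_cases h : A \ F = {a}
    · exact ⟨b, hb, by rwa [h, Ne, singleton_inj]⟩
    · exact ⟨a, ha, h⟩
  refine ⟨y, hy, fun q ↦ ?_⟩
  by_contra! h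
  refine hAF (sdiff_eq_singleton_of_forall_subset hA hF (q := q) fun cf hcf hq c hc ↦ ?_)
  have := h cf hcf hq c hc
  grind

theorem exists_seq_mem_and_succ_ne (ℓ : ℕ → Finset α) (hℓ : ∀ k, 1 < #(ℓ (k + 1)))
    {a : α} (ha : a ∈ ℓ 0) : ∃ c : ℕ → α, c 0 = a ∧ (∀ k, c k ∈ ℓ k) ∧ ∀ k, c (k + 1) ≠ c k := by
  choose next hnext_mem hnext_ne using fun k b ↦ exists_mem_ne (hℓ k) b
  refine ⟨fun k ↦ Nat.rec a next k, rfl, ?_, fun k ↦ hnext_ne k _⟩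
  rintro (_ | k)
  exacts [ha, hnext_mem k _]

end ListChoice

theorem ZMod.apply_val_add_one_ne {α : Type*} {n : ℕ} [NeZero n] {c : ℕ → α}
    (hstep : ∀ k, k + 1 < n → c (k + 1) ≠ c k) (hwrap : c 0 ≠ c (n - 1)) (i : ZMod n) :
    c (i + 1).val ≠ c i.val := by
  obtain ⟨k, hk, rfl⟩ : ∃ k < n, (k : ZMod n) = i := ⟨i.val, i.val_lt, i.natCast_zmod_val⟩
  rw [ZMod.val_natCast_of_lt hk, ← Nat.cast_succ]
  rcases (Nat.succ_le_of_lt hk).lt_or_eq with hlt | heq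
  · rw [ZMod.val_natCast_of_lt hlt]
    exact hstep k hlt
  · rw [heq, ZMod.natCast_self, ZMod.val_zero, show k = n - 1 by omega]
    exact hwrap

theorem Sym2.mk_apply_injective {V : Type*} {f : V → V} (hf : ∀ v, f (f v) = v → f v = v) :
    Injective fun v ↦ s(v, f v) := by
  intro v w h
  rcases Sym2.eq_iff.1 h with ⟨rfl, -⟩ | ⟨rfl, hw⟩
  · rfl
  · exact hf w hw

theorem Sym2.eq_or_eq_of_mem_mk_apply {V : Type*} {f : V → V} {v w x : V}
    (hv : x ∈ s(v, f v)) (hw : x ∈ s(w, f w)) : v = w ∨ v = f w ∨ f v = w ∨ f v = f w := by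
  rw [Sym2.mem_iff] at hv hw
  rcases hv with rfl | rfl <;> rcases hw with h | h <;> simp [h]

theorem isListEdgeColoring_extend {V ι : Type*} {G : SimpleGraph V} {L : Sym2 V → Finset ℕ}
    {e : ι → Sym2 V} (he : Injective e) (hG : G.edgeSet ⊆ Set.range e) {κ : ι → ℕ}
    (hmem : ∀ i, κ i ∈ L (e i)) (hne : ∀ i j, i ≠ j → (∃ v, v ∈ e i ∧ v ∈ e j) → κ i ≠ κ j) :
    IsListEdgeColoring G L (Function.extend e κ 0) := by
  refine ⟨fun x hx ↦ ?_, fun x hx y hy hxy hshare ↦ ?_⟩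
  · obtain ⟨i, rfl⟩ := hG hx
    rw [he.extend_apply]
    exact hmem i
  · obtain ⟨i, rfl⟩ := hG hx
    obtain ⟨j, rfl⟩ := hG hy
    rw [he.extend_apply, he.extend_apply]
    exact hne i j (ne_of_apply_ne e hxy) hshare

theorem ZMod.val_neg_one_eq_sub_one {n : ℕ} [NeZero n] : (-1 : ZMod n).val = n - 1 := by
  obtain ⟨m, rfl⟩ : ∃ m, n = m + 1 := Nat.exists_eq_succ_of_ne_zero (NeZero.ne n)
  exact ZMod.val_neg_one m

section CyclePendant

variable {n : ℕ}

def cyclePendantSucc (n : ℕ) : ZMod n ⊕ Unit → ZMod n ⊕ Unit :=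
  Sum.elim (fun i ↦ inl (i + 1)) fun _ ↦ inl 0

theorem cyclePendant_adj_iff {a b : ZMod n ⊕ Unit} :
    (cyclePendant n).Adj a b ↔ a ≠ b ∧ (b = cyclePendantSucc n a ∨ a = cyclePendantSucc n b) := by
  rcases a with i | ⟨⟩ <;> rcases b with j | ⟨⟩ <;> simp [cyclePendant, cyclePendantSucc, eq_comm]

theorem cyclePendant_adj_succ [Nontrivial (ZMod n)] (v : ZMod n ⊕ Unit) :
    (cyclePendant n).Adj v (cyclePendantSucc n v) := by
  rcases v with i | ⟨⟩ <;> simp [cyclePendant_adj_iff, cyclePendantSucc]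

theorem cyclePendant_edgeSet_subset :
    (cyclePendant n).edgeSet ⊆ Set.range fun v ↦ s(v, cyclePendantSucc n v) := by
  intro e he
  induction e using Sym2.ind with
  | h a b =>
    rw [SimpleGraph.mem_edgeSet, cyclePendant_adj_iff] at he
    rcases he.2 with rfl | rfl
    exacts [⟨a, rfl⟩, ⟨b, Sym2.eq_swap⟩]

theorem cyclePendantSucc_succ_ne (h2 : (2 : ZMod n) ≠ 0) (v : ZMod n ⊕ Unit) :
    cyclePendantSucc n (cyclePendantSucc n v) ≠ v := by
  rcases v with i | ⟨⟩ <;>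
    simp only [cyclePendantSucc, elim_inl, elim_inr, ne_eq, inl.injEq, reduceCtorEq,
      not_false_eq_true]
  exact fun h ↦ h2 (by linear_combination h)

theorem cyclePendant_exists_isListEdgeColoring (h2 : (2 : ZMod n) ≠ 0)
    {L : Sym2 (ZMod n ⊕ Unit) → Finset ℕ} (g : ZMod n → ℕ) (cf : ℕ)
    (hg : ∀ i, g i ∈ L s(inl i, inl (i + 1))) (hcf : cf ∈ L s(inl 0, inr ()))
    (hstep : ∀ i, g (i + 1) ≠ g i) (hcf_first : cf ≠ g 0) (hcf_last : cf ≠ g (-1)) :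
    ∃ C, IsListEdgeColoring (cyclePendant n) L C := by
  refine ⟨_, isListEdgeColoring_extend (κ := Sum.elim g fun _ ↦ cf)
    (Sym2.mk_apply_injective fun v h ↦ absurd h (cyclePendantSucc_succ_ne h2 v))
    cyclePendant_edgeSet_subset ?_ ?_⟩
  · rintro (i | ⟨⟩)
    exacts [hg i, Sym2.eq_swap ▸ hcf]
  · intro v w hvw ⟨x, hv, hw⟩
    have h := Sym2.eq_or_eq_of_mem_mk_apply hv hw
    rcases v with i | ⟨⟩ <;> rcases w with j | ⟨⟩ <;>
      simp only [cyclePendantSucc, elim_inl, elim_inr, inl.injEq, reduceCtorEq, ne_eq] at h hvw ⊢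
    all_goals grind

theorem cyclePendant_exists_isListEdgeColoring_of_seq [NeZero n] (h2 : (2 : ZMod n) ≠ 0)
    {L : Sym2 (ZMod n ⊕ Unit) → Finset ℕ} (c : ℕ → ℕ) (cf : ℕ)
    (hc : ∀ k : ℕ, c k ∈ L s(inl (k : ZMod n), inl ((k : ZMod n) + 1)))
    (hcf : cf ∈ L s(inl 0, inr ())) (hstep : ∀ k, k + 1 < n → c (k + 1) ≠ c k)
    (hwrap : c 0 ≠ c (n - 1)) (hcf_first : cf ≠ c 0) (hcf_last : cf ≠ c (n - 1)) :
    ∃ C, IsListEdgeColoring (cyclePendant n) L C := by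
  refine cyclePendant_exists_isListEdgeColoring h2 (fun i ↦ c i.val) cf (fun i ↦ ?_) hcf
    (ZMod.apply_val_add_one_ne hstep hwrap) (by simpa using hcf_first) ?_
  · simpa using hc i.val
  · rwa [ZMod.val_neg_one_eq_sub_one]

end CyclePendant

theorem cycle_pendant_list_edge_colorable (n : ℕ) (hn : 3 ≤ n)
    (L : Sym2 (ZMod n ⊕ Unit) → Finset ℕ)
    (hL : ∀ e ∈ (cyclePendant n).edgeSet, 2 ≤ (L e).card)
    (hL1 : 3 ≤ (L s(Sum.inl 0, Sum.inl 1)).card) :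
    ∃ C, IsListEdgeColoring (cyclePendant n) L C := by
  have : NeZero n := ⟨by omega⟩
  have : Nontrivial (ZMod n) := ZMod.nontrivial_iff.2 (by omega)
  have h2 : (2 : ZMod n) ≠ 0 := by
    simpa using (ZMod.natCast_eq_zero_iff 2 n).not.2 (Nat.not_dvd_of_pos_of_lt two_pos hn)
  have hcycle (k : ℕ) : 1 < #(L s(inl (k : ZMod n), inl ((k : ZMod n) + 1))) :=
    hL _ (cyclePendant_adj_succ (inl _))
  obtain ⟨y, hy, hchoice⟩ := exists_mem_forall_exists_mem_ne hL1
    (hL s(inl 0, inr ()) (cyclePendant_adj_succ (inr ())).symm) (hcycle 1)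
  obtain ⟨d, rfl, hd_mem, hd_ne⟩ := exists_seq_mem_and_succ_ne
    (fun k ↦ L s(inl ((k + 1 : ℕ) : ZMod n), inl ((k + 1 : ℕ) + 1))) (fun k ↦ hcycle (k + 2)) hy
  obtain ⟨cf, hcf, hcf_last, c₁, hc₁, hc₁cf, hc₁_last, hc₁d⟩ := hchoice (d (n - 2))
  let c : ℕ → ℕ := fun | 0 => c₁ | k + 1 => d k
  have hc_mem : ∀ k : ℕ, c k ∈ L s(inl (k : ZMod n), inl ((k : ZMod n) + 1))
    | 0 => by simpa using hc₁
    | k + 1 => hd_mem k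
  have hstep : ∀ k, k + 1 < n → c (k + 1) ≠ c k
    | 0, _ => hc₁d.symm
    | k + 1, _ => hd_ne k
  have hc_last : c (n - 1) = d (n - 2) := by
    obtain ⟨m, rfl⟩ : ∃ m, n = m + 2 := ⟨n - 2, by omega⟩
    rfl
  exact cyclePendant_exists_isListEdgeColoring_of_seq h2 c cf hc_mem hcf hstep
    (hc_last ▸ hc₁_last) hc₁cf.symm (hc_last ▸ hcf_last)
end

section
/- Let G be a graph with a list assignment L on its edges, and let v₁v₂ and w₁w₂ be two non-adjacent edges of G (sharing no endpoint). If |L(v₁v₂)|·|L(w₁w₂)| > Σ ⌊|L(vᵢwⱼ)|/2⌋·⌈|L(vᵢwⱼ)|/2⌉, where the sum ranges over all edges vᵢwⱼ ∈ E(G) with i,j ∈ {1,2}, then there exist colours c₁ ∈ L(v₁v₂) and c₂ ∈ L(w₁w₂) that are compatible. -/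
/-!
If the lists of `v₁v₂` and `w₁w₂` share a colour, use it on both edges. Otherwise they are
disjoint, and a pair `(c₁, c₂)` is bad only if both colours lie on the list of one of the at most
four edges `vᵢwⱼ`, the only edges meeting both `v₁v₂` and `w₁w₂`. Since a list `C` meets the two
disjoint lists in sets of total size at most `|C|`, it blocks at most `⌊|C|/2⌋ ⌈|C|/2⌉` pairs, so
the hypothesis leaves a pair unblocked.
-/

open Finset

theorem Nat.mul_le_div_two_mul_succ_div_two {a b n : ℕ} (h : a + b ≤ n) :
    a * b ≤ n / 2 * ((n + 1) / 2) := by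
  set k := n / 2 with hk
  set m := (n + 1) / 2 with hm
  have hkm : k ≤ m := by omega
  have hmk : m ≤ k + 1 := by omega
  -- `a * (k + m - a) = k * m - (k - a) * (m - a)`, and `(k - a) * (m - a) ≥ 0` because no
  -- integer lies strictly between `k` and `m`
  have hb : a * b ≤ a * (k + m - a) := Nat.mul_le_mul_left a (by omega)
  zify [show a ≤ k + m by omega] at hb ⊢
  rcases le_or_gt a k with ha | ha
  · nlinarith [mul_nonneg (sub_nonneg.2 (show (a : ℤ) ≤ k by exact_mod_cast ha))
      (sub_nonneg.2 (show (a : ℤ) ≤ m by exact_mod_cast ha.trans hkm))]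
  · nlinarith [mul_nonneg (sub_nonneg.2 (show (k : ℤ) ≤ a by exact_mod_cast ha.le))
      (sub_nonneg.2 (show (m : ℤ) ≤ a by exact_mod_cast hmk.trans ha))]

theorem Finset.card_inter_mul_card_inter_le {α : Type*} [DecidableEq α] {A B : Finset α}
    (hAB : Disjoint A B) (C : Finset α) :
    #(C ∩ A) * #(C ∩ B) ≤ #C / 2 * ((#C + 1) / 2) := by
  refine Nat.mul_le_div_two_mul_succ_div_two ?_
  rw [← card_union_of_disjoint (hAB.mono inter_subset_right inter_subset_right)]
  exact card_le_card (union_subset inter_subset_left inter_subset_left)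

theorem Finset.exists_mem_mem_forall_not_mem_and_mem {ι α : Type*} [DecidableEq α]
    {A B : Finset α} (hAB : Disjoint A B) (s : Finset ι) (C : ι → Finset α)
    (hsum : ∑ i ∈ s, #(C i) / 2 * ((#(C i) + 1) / 2) < #A * #B) :
    ∃ a ∈ A, ∃ b ∈ B, ∀ i ∈ s, ¬(a ∈ C i ∧ b ∈ C i) := by
  by_contra! hcover
  have hsub : A ×ˢ B ⊆ s.biUnion fun i ↦ (C i ∩ A) ×ˢ (C i ∩ B) := by
    rintro ⟨a, b⟩ hab
    obtain ⟨ha, hb⟩ := mem_product.1 hab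
    obtain ⟨i, hi, hai, hbi⟩ := hcover a ha b hb
    exact mem_biUnion.2 ⟨i, hi, mem_product.2 ⟨mem_inter.2 ⟨hai, ha⟩, mem_inter.2 ⟨hbi, hb⟩⟩⟩
  refine hsum.not_ge ?_
  calc #A * #B = #(A ×ˢ B) := (card_product A B).symm
    _ ≤ ∑ i ∈ s, #((C i ∩ A) ×ˢ (C i ∩ B)) := (card_le_card hsub).trans card_biUnion_le
    _ ≤ ∑ i ∈ s, #(C i) / 2 * ((#(C i) + 1) / 2) := by
      gcongr with i
      rw [card_product]
      exact card_inter_mul_card_inter_le hAB (C i)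

theorem compatible_colours_exist_general {V : Type*} (G : SimpleGraph V) [DecidableRel G.Adj]
    (L : Sym2 V → Finset ℕ) (v₁ v₂ w₁ w₂ : V)
    (hne : v₁ ≠ w₁ ∧ v₁ ≠ w₂ ∧ v₂ ≠ w₁ ∧ v₂ ≠ w₂)
    (hsum :
      (if G.Adj v₁ w₁ then (L s(v₁, w₁)).card / 2 * (((L s(v₁, w₁)).card + 1) / 2) else 0) +
      (if G.Adj v₁ w₂ then (L s(v₁, w₂)).card / 2 * (((L s(v₁, w₂)).card + 1) / 2) else 0) +
      (if G.Adj v₂ w₁ then (L s(v₂, w₁)).card / 2 * (((L s(v₂, w₁)).card + 1) / 2) else 0) +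
      (if G.Adj v₂ w₂ then (L s(v₂, w₂)).card / 2 * (((L s(v₂, w₂)).card + 1) / 2) else 0)
        < (L s(v₁, v₂)).card * (L s(w₁, w₂)).card) :
    ∃ c₁ ∈ L s(v₁, v₂), ∃ c₂ ∈ L s(w₁, w₂),
      c₁ = c₂ ∨
      ∀ x y, G.Adj x y →
        s(x, y) ≠ s(v₁, v₂) → (∃ u, u ∈ s(x, y) ∧ u ∈ s(v₁, v₂)) →
        s(x, y) ≠ s(w₁, w₂) → (∃ u, u ∈ s(x, y) ∧ u ∈ s(w₁, w₂)) →
        ¬(c₁ ∈ L s(x, y) ∧ c₂ ∈ L s(x, y)) := by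
  by_cases hcommon : ∃ c ∈ L s(v₁, v₂), c ∈ L s(w₁, w₂)
  · obtain ⟨c, h₁, h₂⟩ := hcommon
    exact ⟨c, h₁, c, h₂, .inl rfl⟩
  have hdisj : Disjoint (L s(v₁, v₂)) (L s(w₁, w₂)) :=
    disjoint_left.2 fun c h₁ h₂ ↦ hcommon ⟨c, h₁, h₂⟩
  let v : Fin 2 → V := ![v₁, v₂]
  let w : Fin 2 → V := ![w₁, w₂]
  have hvw : ∀ i j, v i ≠ w j := by simpa [Fin.forall_fin_two, v, w, and_assoc] using hne
  let between : Finset (Fin 2 × Fin 2) := univ.filter fun ij ↦ G.Adj (v ij.1) (w ij.2)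
  obtain ⟨c₁, hc₁, c₂, hc₂, hgood⟩ := exists_mem_mem_forall_not_mem_and_mem hdisj between
    (fun ij ↦ L s(v ij.1, w ij.2))
    (by
      rw [sum_filter, Fintype.sum_prod_type, Fin.sum_univ_two, Fin.sum_univ_two, Fin.sum_univ_two,
        ← add_assoc]
      exact hsum)
  refine ⟨c₁, hc₁, c₂, hc₂, .inr ?_⟩
  rintro x y hxy - ⟨u, hu, huv⟩ - ⟨u', hu', hu'w⟩
  obtain ⟨i, rfl⟩ : ∃ i, v i = u := by simpa [Fin.exists_fin_two, v, eq_comm] using huv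
  obtain ⟨j, rfl⟩ : ∃ j, w j = u' := by simpa [Fin.exists_fin_two, w, eq_comm] using hu'w
  have hedge : s(x, y) = s(v i, w j) := (Sym2.mem_and_mem_iff (hvw i j)).1 ⟨hu, hu'⟩
  rw [← G.mem_edgeSet, hedge, G.mem_edgeSet] at hxy
  rw [hedge]
  exact hgood (i, j) (by simpa [between] using hxy)

theorem compatible_colours_exist {V : Type*} (G : SimpleGraph V) [DecidableRel G.Adj]
    (L : Sym2 V → Finset ℕ) (v₁ v₂ w₁ w₂ : V)
    (hv : G.Adj v₁ v₂) (hw : G.Adj w₁ w₂)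
    (hne : v₁ ≠ w₁ ∧ v₁ ≠ w₂ ∧ v₂ ≠ w₁ ∧ v₂ ≠ w₂)
    (hsum :
      (if G.Adj v₁ w₁ then (L s(v₁, w₁)).card / 2 * (((L s(v₁, w₁)).card + 1) / 2) else 0) +
      (if G.Adj v₁ w₂ then (L s(v₁, w₂)).card / 2 * (((L s(v₁, w₂)).card + 1) / 2) else 0) +
      (if G.Adj v₂ w₁ then (L s(v₂, w₁)).card / 2 * (((L s(v₂, w₁)).card + 1) / 2) else 0) +
      (if G.Adj v₂ w₂ then (L s(v₂, w₂)).card / 2 * (((L s(v₂, w₂)).card + 1) / 2) else 0)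
        < (L s(v₁, v₂)).card * (L s(w₁, w₂)).card) :
    ∃ c₁ ∈ L s(v₁, v₂), ∃ c₂ ∈ L s(w₁, w₂),
      c₁ = c₂ ∨
      ∀ x y, G.Adj x y →
        s(x, y) ≠ s(v₁, v₂) → (∃ u, u ∈ s(x, y) ∧ u ∈ s(v₁, v₂)) →
        s(x, y) ≠ s(w₁, w₂) → (∃ u, u ∈ s(x, y) ∧ u ∈ s(w₁, w₂)) →
        ¬(c₁ ∈ L s(x, y) ∧ c₂ ∈ L s(x, y)) :=
  compatible_colours_exist_general G L v₁ v₂ w₁ w₂ hne hsum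
end

section
/- Every 3-regular Halin graph has chromatic index 3, i.e., its edges can be properly coloured with 3 colours. -/
/-- A subset of `ZMod n` is a cyclic interval (a set of consecutive elements). -/
def CyclicInterval (n : ℕ) (I : Set (ZMod n)) : Prop :=
  ∃ (s : ZMod n) (len : ℕ), I = {x | ∃ j : ℕ, j < len ∧ x = s + (j : ZMod n)}

/-- `G` is a Halin graph: it is the union of a tree `T` without degree-2 vertices and a
cycle `σ 0, σ 1, …, σ (n-1)` through precisely the leaves of `T`, where the cyclic order
of the leaves is compatible with a planar embedding of `T`:  for every edge `ab` of the
tree, the leaves lying in the component of `a` of `T - ab` form a set of consecutive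
vertices of the cycle (this is exactly the condition for the resulting graph to be
planar, i.e. for the cycle to pass around the tree in the natural cyclic order). -/
def IsHalin {V : Type*} (G : SimpleGraph V) : Prop :=
  ∃ (T : SimpleGraph V) (n : ℕ) (σ : ZMod n → V),
    T.IsTree ∧ T ≤ G ∧
    (∀ v : V, (T.neighborSet v).ncard ≠ 2) ∧
    3 ≤ n ∧ Function.Injective σ ∧
    Set.range σ = {v : V | (T.neighborSet v).ncard = 1} ∧
    (∀ u v : V, (G.Adj u v ∧ ¬T.Adj u v) ↔
      ∃ i : ZMod n, (u = σ i ∧ v = σ (i + 1)) ∨ (v = σ i ∧ u = σ (i + 1))) ∧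
    (∀ a b : V, T.Adj a b →
      CyclicInterval n {i : ZMod n | (T.deleteEdges {s(a, b)}).Reachable a (σ i)})

/-- A proper edge colouring of `G` with colours in `α`. -/
def IsProperEdgeColoring {V α : Type*} (G : SimpleGraph V) (C : Sym2 V → α) : Prop :=
  ∀ e ∈ G.edgeSet, ∀ f ∈ G.edgeSet, e ≠ f → (∃ v, v ∈ e ∧ v ∈ f) → C e ≠ C f


/-!
Deleting an edge `vp` of the tree `T` leaves a branch at `v`, whose leaves are consecutive on the
Halin cycle. By induction on the number of these leaves, the branch (its hanging edge `vp`, its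
tree edges and the cycle edges between its leaves) has a proper colouring giving `vp` any colour
`a` and avoiding any prescribed colours `x` at its first and `y` at its last leaf, for distinct
`a`, `x`, `y`. At an internal vertex `v` with children `w₁`, `w₂` the leaf interval splits into
the two intervals of the children, joined by a single cycle edge: colour the first child's branch
with `(y, x, a)` in the roles of `(a, x, y)`, the second's with `(x, a, y)`, and the joining edge
with `a`. Finally, for a leaf `o` with neighbour `r` the branch at `r` contains every other vertex,
and the two cycle edges at `o` receive `x` and `y`.
-/

namespace ZMod

open Set

variable {n : ℕ}

def cyclicItv (s : ZMod n) (l : ℕ) : Set (ZMod n) := {x | ∃ j < l, x = s + j}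

theorem cyclicInterval_iff {I : Set (ZMod n)} :
    CyclicInterval n I ↔ ∃ s l, I = cyclicItv s l := Iff.rfl

theorem eq_of_add_natCast_eq {s : ZMod n} {a b : ℕ} (ha : a < n) (hb : b < n)
    (h : s + (a : ZMod n) = s + b) : a = b := by
  simpa [val_natCast_of_lt ha, val_natCast_of_lt hb] using congrArg val (add_left_cancel h)

theorem self_mem_cyclicItv {s : ZMod n} {l : ℕ} (hl : 0 < l) : s ∈ cyclicItv s l :=
  ⟨0, hl, by simp⟩

theorem add_sub_one_mem_cyclicItv {s : ZMod n} {l : ℕ} (hl : 0 < l) :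
    s + l - 1 ∈ cyclicItv s l :=
  ⟨l - 1, by omega, by rw [Nat.cast_sub hl, Nat.cast_one, add_sub_assoc]⟩

theorem cyclicItv_add (s : ZMod n) (l₁ l₂ : ℕ) :
    cyclicItv s (l₁ + l₂) = cyclicItv s l₁ ∪ cyclicItv (s + (l₁ : ZMod n)) l₂ := by
  ext x
  constructor
  · rintro ⟨j, hj, rfl⟩
    by_cases hj₁ : j < l₁
    · exact Or.inl ⟨j, hj₁, rfl⟩
    · refine Or.inr ⟨j - l₁, by omega, ?_⟩
      rw [add_assoc, ← Nat.cast_add, Nat.add_sub_cancel' (by omega)]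
  · rintro (⟨j, hj, rfl⟩ | ⟨j, hj, rfl⟩)
    · exact ⟨j, by omega, rfl⟩
    · exact ⟨l₁ + j, by omega, by push_cast; ring⟩

theorem disjoint_cyclicItv {s : ZMod n} {l₁ l₂ : ℕ} (h : l₁ + l₂ ≤ n) :
    Disjoint (cyclicItv s l₁) (cyclicItv (s + (l₁ : ZMod n)) l₂) := by
  rw [Set.disjoint_left]
  rintro _ ⟨j, hj, rfl⟩ ⟨k, hk, hjk⟩
  rw [add_assoc, ← Nat.cast_add] at hjk
  have := eq_of_add_natCast_eq (by omega) (by omega) hjk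
  omega

theorem sub_one_notMem_cyclicItv {s : ZMod n} {l : ℕ} (hl : l < n) : s - 1 ∉ cyclicItv s l := by
  rintro ⟨j, hj, hsj⟩
  have : s + ((j + 1 : ℕ) : ZMod n) = s + ((0 : ℕ) : ZMod n) := by
    rw [Nat.cast_succ, ← add_assoc, ← hsj]; simp
  have := eq_of_add_natCast_eq (by omega) (by omega) this
  omega

theorem cyclicItv_add_one_eq_compl [NeZero n] (s : ZMod n) : cyclicItv (s + 1) (n - 1) = {s}ᶜ := by
  ext x
  simp only [mem_compl_iff, mem_singleton_iff]
  constructor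
  · rintro ⟨j, hj, rfl⟩ h
    have : s + ((j + 1 : ℕ) : ZMod n) = s + ((0 : ℕ) : ZMod n) := by
      push_cast; linear_combination h
    have := eq_of_add_natCast_eq (by omega) (NeZero.pos n) this
    omega
  · intro hx
    refine ⟨(x - s - 1).val, ?_, by rw [natCast_zmod_val]; ring⟩
    have hne : (x - s - 1).val ≠ n - 1 := by
      intro h
      apply hx
      have : ((x - s - 1).val : ZMod n) = ((n - 1 : ℕ) : ZMod n) := by rw [h]
      rw [natCast_zmod_val, Nat.cast_sub NeZero.one_le, natCast_self] at this
      linear_combination this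
    have := val_lt (x - s - 1)
    omega

theorem add_one_eq_of_mem_cyclicItv {s i : ZMod n} {l₁ l₂ : ℕ} (h : l₁ + l₂ < n)
    (hi : i ∈ cyclicItv s l₁) (hi' : i + 1 ∈ cyclicItv (s + (l₁ : ZMod n)) l₂) :
    i = s + (l₁ : ZMod n) - 1 := by
  obtain ⟨j, hj, rfl⟩ := hi
  obtain ⟨k, hk, hjk⟩ := hi'
  rw [add_assoc, add_assoc, ← Nat.cast_one, ← Nat.cast_add, ← Nat.cast_add] at hjk
  have := eq_of_add_natCast_eq (by omega) (by omega) hjk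
  rw [eq_sub_iff_add_eq, add_assoc, ← Nat.cast_one, ← Nat.cast_add]
  congr 2
  omega

theorem add_one_notMem_cyclicItv {s i : ZMod n} {l₁ l₂ : ℕ} (h : l₁ + l₂ < n)
    (hi : i ∈ cyclicItv (s + (l₁ : ZMod n)) l₂) : i + 1 ∉ cyclicItv s l₁ := by
  obtain ⟨k, hk, rfl⟩ := hi
  rintro ⟨j, hj, hjk⟩
  rw [add_assoc, add_assoc, ← Nat.cast_one, ← Nat.cast_add, ← Nat.cast_add] at hjk
  have := eq_of_add_natCast_eq (by omega) (by omega) hjk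
  omega

theorem eq_cyclicItv_of_union_eq {A B : Set (ZMod n)} {s : ZMod n} {l : ℕ} (hl : l < n)
    (hA : CyclicInterval n A) (hB : B.Nonempty) (hAB : Disjoint A B)
    (hU : A ∪ B = cyclicItv s l) (hs : s ∈ A) :
    ∃ l₁ l₂, 0 < l₁ ∧ 0 < l₂ ∧ l₁ + l₂ = l ∧
      A = cyclicItv s l₁ ∧ B = cyclicItv (s + (l₁ : ZMod n)) l₂ := by
  obtain ⟨t, L, rfl⟩ := cyclicInterval_iff.mp hA
  have hAI : cyclicItv t L ⊆ cyclicItv s l := hU ▸ subset_union_left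
  -- `A` cannot run past `s` backwards, since `s - 1` lies outside `cyclicItv s l`
  obtain ⟨j₀, hj₀, rfl⟩ := hs
  obtain rfl : j₀ = 0 := by
    by_contra hj
    refine sub_one_notMem_cyclicItv hl (hAI ⟨j₀ - 1, by omega, ?_⟩)
    rw [Nat.cast_sub (by omega)]; ring
  simp only [Nat.cast_zero, add_zero] at hAI hU ⊢
  obtain ⟨_, hb⟩ := hB
  obtain ⟨jb, hjb, rfl⟩ := (hU ▸ subset_union_right : B ⊆ cyclicItv t l) hb
  have hLjb : L ≤ jb := not_lt.mp fun h ↦ hAB.notMem_of_mem_right hb ⟨jb, h, rfl⟩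
  refine ⟨L, l - L, hj₀, by omega, by omega, rfl, ?_⟩
  have hsplit := cyclicItv_add t L (l - L)
  rw [Nat.add_sub_cancel' (by omega), ← hU] at hsplit
  rw [← hAB.sup_sdiff_cancel_left]
  exact (congrArg (· \ cyclicItv t L) hsplit).trans
    (disjoint_cyclicItv (by omega)).sup_sdiff_cancel_left

theorem exists_eq_cyclicItv_of_union_eq {A B : Set (ZMod n)} {s : ZMod n} {l : ℕ} (hl : l < n)
    (hA : CyclicInterval n A) (hB : CyclicInterval n B) (hA' : A.Nonempty) (hB' : B.Nonempty)
    (hAB : Disjoint A B) (hU : A ∪ B = cyclicItv s l) :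
    ∃ l₁ l₂, 0 < l₁ ∧ 0 < l₂ ∧ l₁ + l₂ = l ∧
      (A = cyclicItv s l₁ ∧ B = cyclicItv (s + (l₁ : ZMod n)) l₂ ∨
        B = cyclicItv s l₁ ∧ A = cyclicItv (s + (l₁ : ZMod n)) l₂) := by
  obtain ⟨_, ha⟩ := hA'
  obtain ⟨j, hj, -⟩ := (hU ▸ subset_union_left : A ⊆ cyclicItv s l) ha
  rcases (hU ▸ self_mem_cyclicItv (by omega) : s ∈ A ∪ B) with hs | hs
  · obtain ⟨l₁, l₂, h₁, h₂, hl, hA, hB⟩ := eq_cyclicItv_of_union_eq hl hA hB' hAB hU hs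
    exact ⟨l₁, l₂, h₁, h₂, hl, Or.inl ⟨hA, hB⟩⟩
  · obtain ⟨l₁, l₂, h₁, h₂, hl, hB, hA⟩ :=
      eq_cyclicItv_of_union_eq hl hB ⟨_, ha⟩ hAB.symm (union_comm A B ▸ hU) hs
    exact ⟨l₁, l₂, h₁, h₂, hl, Or.inr ⟨hB, hA⟩⟩

end ZMod

theorem Set.exists_eq_insert_pair_of_ncard_eq_three {β : Type*} {S : Set β} {p : β}
    (h : S.ncard = 3) (hp : p ∈ S) : ∃ a b, a ≠ b ∧ a ≠ p ∧ b ≠ p ∧ S = {p, a, b} := by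
  obtain ⟨a, b, hab, hS⟩ := ncard_eq_two.mp (by rw [ncard_sdiff_singleton_of_mem hp, h] :
    (S \ {p}).ncard = 2)
  have ha : a ∈ S \ {p} := hS ▸ mem_insert a {b}
  have hb : b ∈ S \ {p} := hS ▸ mem_insert_of_mem a rfl
  refine ⟨a, b, hab, ha.2, hb.2, ?_⟩
  rw [← hS, insert_sdiff_singleton, insert_eq_of_mem hp]

namespace SimpleGraph

open Set

variable {V : Type*} {T : SimpleGraph V} {u v w w₁ w₂ p x y o r : V}

def branch (T : SimpleGraph V) (v p : V) : Set V :=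
  {x | (T.deleteEdges {s(v, p)}).Reachable v x}

theorem self_mem_branch : v ∈ T.branch v p := Reachable.refl v

theorem branch_mono {T' : SimpleGraph V} (h : T' ≤ T) : T'.branch v p ⊆ T.branch v p :=
  fun _ hx ↦ hx.mono (deleteEdges_mono h)

theorem IsAcyclic.notMem_branch (hT : T.IsAcyclic) (h : T.Adj v p) : p ∉ T.branch v p :=
  isAcyclic_iff_forall_adj_isBridge.mp hT h

theorem mem_branch_of_adj (hx : x ∈ T.branch v p) (hxy : T.Adj x y) (he : s(x, y) ≠ s(v, p)) :
    y ∈ T.branch v p :=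
  hx.trans (deleteEdges_adj.mpr ⟨hxy, he⟩).reachable

theorem Reachable.exists_adj_mem_branch (h : T.Reachable v x) (hx : x ≠ v) :
    ∃ u, T.Adj v u ∧ x ∈ T.branch u v := by
  classical
  obtain ⟨q⟩ := h
  obtain ⟨q, hq⟩ := q.toPath
  cases q with
  | nil => exact absurd rfl hx
  | cons huv q =>
    have hv : v ∉ q.support := (Walk.cons_isPath_iff _ _).mp hq |>.2
    exact ⟨_, huv, ⟨q.toDeleteEdge _ fun he ↦ hv (q.snd_mem_support_of_mem_edges he)⟩⟩

theorem IsAcyclic.branch_subset (hT : T.IsAcyclic) (huv : T.Adj u v)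
    (hup : u ≠ p) : T.branch u v ⊆ T.branch v p := by
  classical
  rintro x ⟨q⟩
  -- a walk from `u` avoiding the edge `uv` cannot visit `v`, so it avoids `vp` as well
  have hv : v ∉ q.support := fun hv ↦ hT.notMem_branch huv ⟨q.takeUntil v hv⟩
  refine mem_branch_of_adj self_mem_branch huv.symm (by simp [hup, huv.ne]) |>.trans
    ⟨q.transfer _ fun e he ↦ ?_⟩
  have heT := edgeSet_deleteEdges _ ▸ q.edges_subset_edgeSet he
  refine edgeSet_deleteEdges _ ▸ ⟨heT.1, ?_⟩
  rintro rfl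
  exact hv (q.fst_mem_support_of_mem_edges he)

theorem IsAcyclic.disjoint_branch (hT : T.IsAcyclic) (h : T.Adj v p) :
    Disjoint (T.branch v p) (T.branch p v) :=
  Set.disjoint_left.mpr fun _ hv hp ↦
    hT.notMem_branch h <| hv.trans <| Reachable.symm <| by
      rwa [branch, Sym2.eq_swap] at hp

theorem IsAcyclic.disjoint_branch_of_ne (hT : T.IsAcyclic) (h₁ : T.Adj w v) (h₂ : T.Adj u v)
    (hne : w ≠ u) : Disjoint (T.branch w v) (T.branch u v) :=
  (hT.disjoint_branch h₁).mono_right (hT.branch_subset h₂ hne.symm)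

theorem IsAcyclic.branch_eq (hT : T.IsAcyclic) :
    T.branch v p = insert v (⋃ u ∈ T.neighborSet v \ {p}, T.branch u v) := by
  ext x
  simp only [mem_insert_iff, mem_iUnion, mem_sdiff, mem_neighborSet, mem_singleton_iff,
    exists_prop]
  constructor
  · intro hx
    refine or_iff_not_imp_left.mpr fun hxv ↦ ?_
    obtain ⟨u, hvu, hxu⟩ := Reachable.exists_adj_mem_branch hx hxv
    rw [deleteEdges_adj, mem_singleton_iff] at hvu
    exact ⟨u, ⟨hvu.1, by rintro rfl; exact hvu.2 rfl⟩, branch_mono (deleteEdges_le _) hxu⟩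
  · rintro (rfl | ⟨u, ⟨hvu, hup⟩, hxu⟩)
    · exact self_mem_branch
    · exact hT.branch_subset hvu.symm hup hxu

theorem adj_of_neighborSet_eq (hN : T.neighborSet v = {p, w₁, w₂}) : T.Adj w₁ v ∧ T.Adj w₂ v :=
  ⟨(by rw [hN]; simp : w₁ ∈ T.neighborSet v).symm, (by rw [hN]; simp : w₂ ∈ T.neighborSet v).symm⟩

theorem IsAcyclic.branch_eq_insert_union (hT : T.IsAcyclic) (hN : T.neighborSet v = {p, w₁, w₂})
    (h₁ : w₁ ≠ p) (h₂ : w₂ ≠ p) : T.branch v p = insert v (T.branch w₁ v ∪ T.branch w₂ v) := by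
  rw [hT.branch_eq, hN, insert_sdiff_of_mem _ (mem_singleton p),
    sdiff_singleton_eq_self (by simp [h₁.symm, h₂.symm])]
  simp

theorem IsAcyclic.branch_eq_singleton (hT : T.IsAcyclic) (h : T.neighborSet v = {p}) :
    T.branch v p = {v} := by
  rw [hT.branch_eq, h, sdiff_self]
  simp

theorem IsTree.branch_eq_compl (hT : T.IsTree) (h : T.neighborSet o = {r}) :
    T.branch r o = {o}ᶜ := by
  have hro : T.Adj r o := (h ▸ rfl : r ∈ T.neighborSet o).symm
  ext x
  refine ⟨fun hx hxo ↦ hT.isAcyclic.notMem_branch hro (hxo ▸ hx), fun hxo ↦ ?_⟩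
  obtain ⟨u, hou, hxu⟩ := (hT.connected.preconnected o x).exists_adj_mem_branch hxo
  obtain rfl : u = r := (h ▸ hou : u ∈ ({r} : Set V))
  exact hxu

theorem IsAcyclic.exists_ncard_neighborSet_eq_one_mem_branch [Finite V] (hT : T.IsAcyclic)
    (hvp : T.Adj v p) : ∃ x ∈ T.branch v p, (T.neighborSet x).ncard = 1 := by
  induction hc : (T.branch v p).ncard using Nat.strong_induction_on generalizing v p with
  | _ c IH =>
  by_cases hv : (T.neighborSet v).ncard = 1
  · exact ⟨v, self_mem_branch, hv⟩
  have hpos : 0 < (T.neighborSet v).ncard := (ncard_pos (toFinite _)).mpr ⟨p, hvp⟩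
  obtain ⟨u, hvu, hup⟩ := exists_ne_of_one_lt_ncard (s := T.neighborSet v) (by omega) p
  have hsub := hT.branch_subset (hvu : T.Adj v u).symm hup
  have hlt : (T.branch u v).ncard < c :=
    hc ▸ ncard_lt_ncard (ssubset_of_subset_not_subset hsub fun h ↦
      hT.notMem_branch (hvu : T.Adj v u).symm (h self_mem_branch))
  obtain ⟨x, hx, hx1⟩ := IH _ hlt (hvu : T.Adj v u).symm rfl
  exact ⟨x, hsub hx, hx1⟩

end SimpleGraph

section EdgeColoring

open Set

variable {V α : Type*}

def IsProperEdgeColoringOn (E : Set (Sym2 V)) (C : Sym2 V → α) : Prop :=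
  ∀ e ∈ E, ∀ f ∈ E, e ≠ f → (∃ v, v ∈ e ∧ v ∈ f) → C e ≠ C f

namespace IsProperEdgeColoringOn

variable {E F : Set (Sym2 V)} {C C' : Sym2 V → α} {e : Sym2 V}

theorem mono (h : IsProperEdgeColoringOn F C) (hEF : E ⊆ F) : IsProperEdgeColoringOn E C :=
  fun e he f hf ↦ h e (hEF he) f (hEF hf)

theorem congr (h : IsProperEdgeColoringOn E C) (hC : ∀ e ∈ E, C' e = C e) :
    IsProperEdgeColoringOn E C' := by
  intro e he f hf hef hs
  rw [hC e he, hC f hf]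
  exact h e he f hf hef hs

theorem union (hE : IsProperEdgeColoringOn E C) (hF : IsProperEdgeColoringOn F C)
    (hEF : ∀ e ∈ E, ∀ f ∈ F, e ≠ f → ∀ v ∈ e, v ∈ f → C e ≠ C f) :
    IsProperEdgeColoringOn (E ∪ F) C := by
  rintro e (he | he) f (hf | hf) hef ⟨v, hve, hvf⟩
  · exact hE e he f hf hef ⟨v, hve, hvf⟩
  · exact hEF e he f hf hef v hve hvf
  · exact (hEF f hf e he hef.symm v hvf hve).symm
  · exact hF e he f hf hef ⟨v, hve, hvf⟩

theorem insert (hE : IsProperEdgeColoringOn E C)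
    (he : ∀ f ∈ E, e ≠ f → ∀ v ∈ e, v ∈ f → C e ≠ C f) :
    IsProperEdgeColoringOn (insert e E) C := by
  rw [insert_eq]
  refine union (fun _ h₁ _ h₂ hne ↦ absurd ((h₁ : _ = e).trans h₂.symm) hne) hE ?_
  rintro _ rfl
  exact he

end IsProperEdgeColoringOn

/-- The induction invariant: a branch hanging from its parent by the edge `head`, whose leaves
run along the Halin cycle from `first` to `last`, coloured so that the cycle edges leaving the
branch at `first` and at `last` can still receive the colours `x` and `y`. -/
structure IsBranchColoring (E : Set (Sym2 V)) (head : Sym2 V) (first last : V) (C : Sym2 V → α)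
    (a x y : α) : Prop where
  apply_head : C head = a
  proper : IsProperEdgeColoringOn E C
  ne_first : ∀ e ∈ E, first ∈ e → C e ≠ x
  ne_last : ∀ e ∈ E, last ∈ e → C e ≠ y

theorem IsBranchColoring.mono {E F : Set (Sym2 V)} {head : Sym2 V} {first last : V}
    {C : Sym2 V → α} {a x y : α} (hC : IsBranchColoring F head first last C a x y)
    (hEF : E ⊆ F) : IsBranchColoring E head first last C a x y :=
  ⟨hC.apply_head, hC.proper.mono hEF, fun e he ↦ hC.ne_first e (hEF he),
    fun e he ↦ hC.ne_last e (hEF he)⟩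

theorem isBranchColoring_singleton {head : Sym2 V} {first last : V} {a x y : α} (hax : a ≠ x)
    (hay : a ≠ y) : IsBranchColoring {head} head first last (fun _ ↦ a) a x y :=
  ⟨rfl, fun _ he _ hf hne ↦ absurd ((he : _ = head).trans hf.symm) hne, fun _ _ _ ↦ hax,
    fun _ _ _ ↦ hay⟩

structure IsPendantAt (E : Set (Sym2 V)) (X : Set V) (w v : V) : Prop where
  mem : w ∈ X
  notMem : v ∉ X
  eq_or_mem : ∀ e ∈ E, ∀ u ∈ e, u = v ∨ u ∈ X
  eq_of_mem : ∀ e ∈ E, v ∈ e → e = s(w, v)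

namespace IsPendantAt

variable {E E₁ E₂ : Set (Sym2 V)} {X X₁ X₂ : Set V} {w w₁ w₂ v u : V} {e f : Sym2 V}

theorem eq_of_notMem (h : IsPendantAt E X w v) (he : e ∈ E) (hu : u ∈ e) (hX : u ∉ X) : u = v :=
  (h.eq_or_mem e he u hu).resolve_right hX

theorem notMem_of_notMem (h : IsPendantAt E X w v) (hu : u ∈ e) (hX : u ∉ X) (hv : u ≠ v) :
    e ∉ E :=
  fun he ↦ hv (h.eq_of_notMem he hu hX)

theorem eq_and_eq (h₁ : IsPendantAt E₁ X₁ w₁ v) (h₂ : IsPendantAt E₂ X₂ w₂ v)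
    (hX : Disjoint X₁ X₂) (he : e ∈ E₁) (hf : f ∈ E₂) (hue : u ∈ e) (huf : u ∈ f) :
    e = s(w₁, v) ∧ f = s(w₂, v) := by
  obtain rfl : u = v := by
    rcases h₁.eq_or_mem e he u hue with hu | hu
    · exact hu
    · exact h₂.eq_of_notMem hf huf (hX.notMem_of_mem_left hu)
  exact ⟨h₁.eq_of_mem e he hue, h₂.eq_of_mem f hf huf⟩

theorem disjoint (h₁ : IsPendantAt E₁ X₁ w₁ v) (h₂ : IsPendantAt E₂ X₂ w₂ v)
    (hX : Disjoint X₁ X₂) : Disjoint E₁ E₂ := by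
  refine Set.disjoint_left.mpr fun e he₁ he₂ ↦ ?_
  obtain ⟨rfl, -⟩ := h₁.eq_and_eq h₂ hX he₁ he₂ e.out_fst_mem e.out_fst_mem
  rcases h₂.eq_or_mem _ he₂ w₁ (Sym2.mem_mk_left w₁ v) with hw | hw
  · exact h₁.notMem (hw ▸ h₁.mem)
  · exact hX.notMem_of_mem_left h₁.mem hw

end IsPendantAt

section Join

variable {E₁ E₂ : Set (Sym2 V)} {X₁ X₂ : Set V} {v p w₁ w₂ f₁ g₁ f₂ g₂ : V}
  {C C₁ C₂ : Sym2 V → α} {a x y : α}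

theorem IsBranchColoring.join_of_eqOn (hax : a ≠ x) (hay : a ≠ y) (hxy : x ≠ y)
    (hE₁ : IsPendantAt E₁ X₁ w₁ v) (hE₂ : IsPendantAt E₂ X₂ w₂ v) (hX : Disjoint X₁ X₂)
    (hp₁ : p ∉ X₁) (hp₂ : p ∉ X₂) (hpv : p ≠ v)
    (hf₁ : f₁ ∈ X₁) (hg₁ : g₁ ∈ X₁) (hf₂ : f₂ ∈ X₂) (hg₂ : g₂ ∈ X₂)
    (h₁ : IsBranchColoring E₁ s(w₁, v) f₁ g₁ C₁ y x a)
    (h₂ : IsBranchColoring E₂ s(w₂, v) f₂ g₂ C₂ x a y)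
    (hC₁ : ∀ e ∈ E₁, C e = C₁ e) (hC₂ : ∀ e ∈ E₂, C e = C₂ e)
    (hCh : C s(v, p) = a) (hCb : C s(g₁, f₂) = a) :
    IsBranchColoring (insert s(v, p) (insert s(g₁, f₂) (E₁ ∪ E₂))) s(v, p) f₁ g₂ C a x y := by
  have hv₁ {u : V} (hu : u ∈ X₁) : u ≠ v := ne_of_mem_of_not_mem hu hE₁.notMem
  have hv₂ {u : V} (hu : u ∈ X₂) : u ≠ v := ne_of_mem_of_not_mem hu hE₂.notMem
  have hC₁v : ∀ e ∈ E₁, v ∈ e → C e = y := fun e he hve ↦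
    hE₁.eq_of_mem e he hve ▸ (hC₁ _ (hE₁.eq_of_mem e he hve ▸ he)).trans h₁.apply_head
  have hC₂v : ∀ e ∈ E₂, v ∈ e → C e = x := fun e he hve ↦
    hE₂.eq_of_mem e he hve ▸ (hC₂ _ (hE₂.eq_of_mem e he hve ▸ he)).trans h₂.apply_head
  refine ⟨hCh, ?_, ?_, ?_⟩
  · refine (((h₁.proper.congr hC₁).union (h₂.proper.congr hC₂) ?_).insert ?_).insert ?_
    · intro e he f hf _ u hue huf
      obtain ⟨rfl, rfl⟩ := hE₁.eq_and_eq hE₂ hX he hf hue huf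
      rw [hC₁v _ he (Sym2.mem_mk_right _ _), hC₂v _ hf (Sym2.mem_mk_right _ _)]
      exact hxy.symm
    · rintro f (hf | hf) _ u hu huf <;> rw [hCb] <;> rcases Sym2.mem_iff.mp hu with rfl | rfl
      · exact (hC₁ f hf ▸ h₁.ne_last f hf huf).symm
      · exact absurd hf (hE₁.notMem_of_notMem huf (hX.notMem_of_mem_right hf₂) (hv₂ hf₂))
      · exact absurd hf (hE₂.notMem_of_notMem huf (hX.notMem_of_mem_left hg₁) (hv₁ hg₁))
      · exact (hC₂ f hf ▸ h₂.ne_first f hf huf).symm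
    · rintro f (rfl | hf | hf) _ u hu huf <;> rw [hCh] <;> rcases Sym2.mem_iff.mp hu with rfl | rfl
      · rcases Sym2.mem_iff.mp huf with rfl | rfl
        exacts [(hv₁ hg₁ rfl).elim, (hv₂ hf₂ rfl).elim]
      · rcases Sym2.mem_iff.mp huf with rfl | rfl
        exacts [(hp₁ hg₁).elim, (hp₂ hf₂).elim]
      · exact (hC₁v f hf huf).symm ▸ hay
      · exact absurd hf (hE₁.notMem_of_notMem huf hp₁ hpv)
      · exact (hC₂v f hf huf).symm ▸ hax
      · exact absurd hf (hE₂.notMem_of_notMem huf hp₂ hpv)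
  · rintro e (rfl | rfl | he | he) hfe
    · rcases Sym2.mem_iff.mp hfe with rfl | rfl
      exacts [(hv₁ hf₁ rfl).elim, (hp₁ hf₁).elim]
    · exact hCb ▸ hax
    · exact hC₁ e he ▸ h₁.ne_first e he hfe
    · exact absurd he (hE₂.notMem_of_notMem hfe (hX.notMem_of_mem_left hf₁) (hv₁ hf₁))
  · rintro e (rfl | rfl | he | he) hle
    · rcases Sym2.mem_iff.mp hle with rfl | rfl
      exacts [(hv₂ hg₂ rfl).elim, (hp₂ hg₂).elim]
    · exact hCb ▸ hay
    · exact absurd he (hE₁.notMem_of_notMem hle (hX.notMem_of_mem_right hg₂) (hv₂ hg₂))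
    · exact hC₂ e he ▸ h₂.ne_last e he hle

theorem IsBranchColoring.join (hax : a ≠ x) (hay : a ≠ y) (hxy : x ≠ y)
    (hE₁ : IsPendantAt E₁ X₁ w₁ v) (hE₂ : IsPendantAt E₂ X₂ w₂ v) (hX : Disjoint X₁ X₂)
    (hp₁ : p ∉ X₁) (hp₂ : p ∉ X₂) (hpv : p ≠ v)
    (hf₁ : f₁ ∈ X₁) (hg₁ : g₁ ∈ X₁) (hf₂ : f₂ ∈ X₂) (hg₂ : g₂ ∈ X₂)
    (h₁ : IsBranchColoring E₁ s(w₁, v) f₁ g₁ C₁ y x a)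
    (h₂ : IsBranchColoring E₂ s(w₂, v) f₂ g₂ C₂ x a y) :
    ∃ C, IsBranchColoring (insert s(v, p) (insert s(g₁, f₂) (E₁ ∪ E₂))) s(v, p) f₁ g₂ C a x y := by
  classical
  have hv {X : Set V} {u : V} (hvX : v ∉ X) (hu : u ∈ X) : u ≠ v := ne_of_mem_of_not_mem hu hvX
  have hE := hE₁.disjoint hE₂ hX
  refine ⟨fun e ↦ if e ∈ E₁ then C₁ e else if e ∈ E₂ then C₂ e else a,
    h₁.join_of_eqOn hax hay hxy hE₁ hE₂ hX hp₁ hp₂ hpv hf₁ hg₁ hf₂ hg₂ h₂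
      (fun e he ↦ if_pos he) (fun e he ↦ (if_neg (hE.notMem_of_mem_right he)).trans (if_pos he))
      ?_ ?_⟩
  · rw [if_neg (hE₁.notMem_of_notMem (Sym2.mem_mk_right v p) hp₁ hpv),
      if_neg (hE₂.notMem_of_notMem (Sym2.mem_mk_right v p) hp₂ hpv)]
  · rw [if_neg (hE₁.notMem_of_notMem (Sym2.mem_mk_right g₁ f₂) (hX.notMem_of_mem_right hf₂)
        (hv hE₂.notMem hf₂)),
      if_neg (hE₂.notMem_of_notMem (Sym2.mem_mk_left g₁ f₂) (hX.notMem_of_mem_left hg₁)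
        (hv hE₁.notMem hg₁))]

end Join

theorem IsBranchColoring.close {E : Set (Sym2 V)} {r o f g : V} {C₀ : Sym2 V → α} {a x y : α}
    (hax : a ≠ x) (hay : a ≠ y) (hxy : x ≠ y) (hE : ∀ e ∈ E, o ∈ e → e = s(r, o))
    (hf : f ≠ r) (hg : g ≠ r) (hfg : f ≠ g) (h : IsBranchColoring E s(r, o) f g C₀ a x y) :
    ∃ C : Sym2 V → α, IsProperEdgeColoringOn (insert s(o, f) (insert s(g, o) E)) C := by
  classical
  have hof : s(o, f) ∉ E := fun he ↦ by
    rcases Sym2.eq_iff.mp (hE _ he (Sym2.mem_mk_left o f)) with ⟨h₁, h₂⟩ | ⟨-, h₂⟩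
    exacts [hf (h₂.trans h₁), hf h₂]
  have hgo : s(g, o) ∉ E := fun he ↦ by
    rcases Sym2.eq_iff.mp (hE _ he (Sym2.mem_mk_right g o)) with ⟨h₁, -⟩ | ⟨h₁, h₂⟩
    exacts [hg h₁, hg (h₁.trans h₂)]
  have hne : s(o, f) ≠ s(g, o) := fun h ↦ by
    rcases Sym2.eq_iff.mp h with ⟨h₁, h₂⟩ | ⟨-, h₂⟩
    exacts [hfg (h₂.trans h₁), hfg h₂]
  set C : Sym2 V → α := fun e ↦ if e = s(o, f) then x else if e = s(g, o) then y else C₀ e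
  have hC₀ : ∀ e ∈ E, C e = C₀ e := fun e he ↦
    (if_neg (ne_of_mem_of_not_mem he hof)).trans (if_neg (ne_of_mem_of_not_mem he hgo))
  have hCf : C s(o, f) = x := if_pos rfl
  have hCg : C s(g, o) = y := (if_neg hne.symm).trans (if_pos rfl)
  have hCo : ∀ e ∈ E, o ∈ e → C e = a := fun e he hoe ↦
    (hC₀ e he).trans (hE e he hoe ▸ h.apply_head)
  refine ⟨C, ((h.proper.congr hC₀).insert ?_).insert ?_⟩
  · intro e he _ u hu hue
    rw [hCg]
    rcases Sym2.mem_iff.mp hu with rfl | rfl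
    · exact (hC₀ e he ▸ h.ne_last e he hue).symm
    · exact hCo e he hue ▸ hay.symm
  · rintro e (rfl | he) _ u hu hue
    · exact hCf ▸ hCg ▸ hxy
    rw [hCf]
    rcases Sym2.mem_iff.mp hu with rfl | rfl
    · exact hCo e he hue ▸ hax.symm
    · exact (hC₀ e he ▸ h.ne_first e he hue).symm

end EdgeColoring

namespace SimpleGraph

open Set

variable {V : Type*} {G T : SimpleGraph V} {v p w : V}

def branchEdges (G T : SimpleGraph V) (v p : V) : Set (Sym2 V) :=
  insert s(v, p) {e | e ∈ G.edgeSet ∧ ∀ u ∈ e, u ∈ T.branch v p}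

theorem IsAcyclic.isPendantAt_branchEdges (hT : T.IsAcyclic) (h : T.Adj w v) :
    IsPendantAt (G.branchEdges T w v) (T.branch w v) w v := by
  refine ⟨self_mem_branch, hT.notMem_branch h, ?_, ?_⟩
  · rintro e (rfl | ⟨-, he⟩) u hu
    · rcases Sym2.mem_iff.mp hu with rfl | rfl
      exacts [Or.inr self_mem_branch, Or.inl rfl]
    · exact Or.inr (he u hu)
  · rintro e (rfl | ⟨-, he⟩) hv
    exacts [rfl, absurd (he v hv) (hT.notMem_branch h)]

theorem IsAcyclic.branchEdges_eq_singleton (hT : T.IsAcyclic) (h : T.neighborSet v = {p}) :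
    G.branchEdges T v p = {s(v, p)} := by
  rw [branchEdges, hT.branch_eq_singleton h]
  suffices hE : {e | e ∈ G.edgeSet ∧ ∀ u ∈ e, u ∈ ({v} : Set V)} = ∅ by
    rw [hE, insert_empty_eq]
  refine eq_empty_of_forall_notMem fun e he ↦ ?_
  obtain ⟨he, hv⟩ := he
  induction e using Sym2.ind with
  | _ a b =>
    obtain rfl : a = v := hv a (Sym2.mem_mk_left a b)
    obtain rfl : b = a := hv b (Sym2.mem_mk_right a b)
    exact G.irrefl he

end SimpleGraph

section Halin

open Set SimpleGraph ZMod

variable {V : Type*} {n : ℕ}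

structure IsCubicHalinWith (G T : SimpleGraph V) (σ : ZMod n → V) : Prop where
  isTree : T.IsTree
  le : T ≤ G
  three_le : 3 ≤ n
  injective : Function.Injective σ
  range_eq : range σ = {v | (T.neighborSet v).ncard = 1}
  adj_iff : ∀ u v, (G.Adj u v ∧ ¬T.Adj u v) ↔
    ∃ i, (u = σ i ∧ v = σ (i + 1)) ∨ (v = σ i ∧ u = σ (i + 1))
  isCyclicInterval : ∀ a b, T.Adj a b → CyclicInterval n (σ ⁻¹' T.branch a b)
  ncard_neighborSet : ∀ v, (G.neighborSet v).ncard = 3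

theorem IsHalin.exists_isCubicHalinWith {G : SimpleGraph V} (hG : IsHalin G)
    (hreg : ∀ v, (G.neighborSet v).ncard = 3) :
    ∃ (T : SimpleGraph V) (n : ℕ) (σ : ZMod n → V), IsCubicHalinWith G T σ := by
  obtain ⟨T, n, σ, hT, hle, -, hn, hσ, hrange, hadj, hint⟩ := hG
  exact ⟨T, n, σ, hT, hle, hn, hσ, hrange, hadj, hint, hreg⟩

namespace IsCubicHalinWith

variable {α : Type*} {G T : SimpleGraph V} {σ : ZMod n → V} {u v p r w₁ w₂ : V}

theorem neZero (H : IsCubicHalinWith G T σ) : NeZero n :=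
  ⟨by have := H.three_le; omega⟩

theorem not_tree_adj_succ (H : IsCubicHalinWith G T σ) (i : ZMod n) :
    ¬T.Adj (σ i) (σ (i + 1)) :=
  ((H.adj_iff _ _).mpr ⟨i, Or.inl ⟨rfl, rfl⟩⟩).2

theorem tree_adj_of_adj (H : IsCubicHalinWith G T σ) (hv : v ∉ range σ) (h : G.Adj v u) :
    T.Adj v u := by
  by_contra hT
  obtain ⟨i, ⟨rfl, -⟩ | ⟨-, rfl⟩⟩ := (H.adj_iff v u).mp ⟨h, hT⟩
  exacts [hv ⟨_, rfl⟩, hv ⟨_, rfl⟩]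

theorem ncard_tree_neighborSet (H : IsCubicHalinWith G T σ) (hv : v ∉ range σ) :
    (T.neighborSet v).ncard = 3 := by
  have : G.neighborSet v = T.neighborSet v :=
    Set.ext fun _ ↦ ⟨H.tree_adj_of_adj hv, fun h ↦ H.le h⟩
  exact this ▸ H.ncard_neighborSet v

theorem exists_tree_neighborSet_eq (H : IsCubicHalinWith G T σ) (i : ZMod n) :
    ∃ p, T.neighborSet (σ i) = {p} :=
  ncard_eq_one.mp (H.range_eq ▸ mem_range_self i : σ i ∈ {v | (T.neighborSet v).ncard = 1})

theorem tree_neighborSet_eq (H : IsCubicHalinWith G T σ) {i : ZMod n} (h : T.Adj (σ i) p) :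
    T.neighborSet (σ i) = {p} := by
  obtain ⟨q, hq⟩ := H.exists_tree_neighborSet_eq i
  obtain rfl : p = q := (hq ▸ h : p ∈ ({q} : Set V))
  exact hq

theorem nonempty_leaves [Finite V] (H : IsCubicHalinWith G T σ) (h : T.Adj v p) :
    (σ ⁻¹' T.branch v p).Nonempty := by
  obtain ⟨x, hx, hx1⟩ := H.isTree.isAcyclic.exists_ncard_neighborSet_eq_one_mem_branch h
  obtain ⟨i, rfl⟩ : x ∈ range σ := H.range_eq ▸ hx1
  exact ⟨i, hx⟩

theorem exists_leaves_split [Finite V] (H : IsCubicHalinWith G T σ) (hv : v ∉ range σ)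
    (hN : T.neighborSet v = {p, w₁, w₂}) (hw : w₁ ≠ w₂) (hw₁ : w₁ ≠ p) (hw₂ : w₂ ≠ p)
    {s : ZMod n} {l : ℕ} (hL : σ ⁻¹' T.branch v p = cyclicItv s l) (hl : l < n) :
    ∃ l₁ l₂, 0 < l₁ ∧ 0 < l₂ ∧ l₁ + l₂ = l ∧
      (σ ⁻¹' T.branch w₁ v = cyclicItv s l₁ ∧
          σ ⁻¹' T.branch w₂ v = cyclicItv (s + (l₁ : ZMod n)) l₂ ∨
        σ ⁻¹' T.branch w₂ v = cyclicItv s l₁ ∧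
          σ ⁻¹' T.branch w₁ v = cyclicItv (s + (l₁ : ZMod n)) l₂) := by
  have hT := H.isTree.isAcyclic
  obtain ⟨h₁, h₂⟩ := adj_of_neighborSet_eq hN
  refine exists_eq_cyclicItv_of_union_eq hl (H.isCyclicInterval _ _ h₁)
    (H.isCyclicInterval _ _ h₂) (H.nonempty_leaves h₁) (H.nonempty_leaves h₂)
    ((hT.disjoint_branch_of_ne h₁ h₂ hw).preimage σ) ?_
  rw [← hL, hT.branch_eq_insert_union hN hw₁ hw₂]
  ext i
  simp only [mem_union, mem_preimage, mem_insert_iff, or_iff_right fun h ↦ hv ⟨i, h⟩]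

theorem mem_branchEdges_of_adj (H : IsCubicHalinWith G T σ) (hv : v ∉ range σ) (hvp : T.Adj v p)
    (hN : T.neighborSet v = {p, w₁, w₂}) (hu : u ∈ T.branch v p) (h : G.Adj v u) :
    s(v, u) ∈ G.branchEdges T w₁ v ∪ G.branchEdges T w₂ v := by
  have hu' : u ∈ T.neighborSet v := H.tree_adj_of_adj hv h
  rw [hN] at hu'
  rcases hu' with rfl | rfl | rfl
  · exact absurd hu (H.isTree.isAcyclic.notMem_branch hvp)
  · exact Or.inl (Sym2.eq_swap ▸ mem_insert _ _)
  · exact Or.inr (Sym2.eq_swap ▸ mem_insert _ _)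

theorem eq_of_adj_of_mem_branch (H : IsCubicHalinWith G T σ) (hN : T.neighborSet v = {p, w₁, w₂})
    (hw : w₁ ≠ w₂) {s : ZMod n} {l₁ l₂ : ℕ} (h₁ : σ ⁻¹' T.branch w₁ v = cyclicItv s l₁)
    (h₂ : σ ⁻¹' T.branch w₂ v = cyclicItv (s + (l₁ : ZMod n)) l₂) (hl : l₁ + l₂ < n)
    {x y : V} (h : G.Adj x y) (hx : x ∈ T.branch w₁ v) (hy : y ∈ T.branch w₂ v) :
    s(x, y) = s(σ (s + l₁ - 1), σ (s + l₁)) := by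
  have hT := H.isTree.isAcyclic
  obtain ⟨hw₁v, hw₂v⟩ := adj_of_neighborSet_eq hN
  have hxv : x ≠ v := ne_of_mem_of_not_mem hx (hT.notMem_branch hw₁v)
  have hyv : y ≠ v := ne_of_mem_of_not_mem hy (hT.notMem_branch hw₂v)
  have hxy : ¬T.Adj x y := fun hxy ↦
    (hT.disjoint_branch_of_ne hw₁v hw₂v hw).notMem_of_mem_right hy
      (mem_branch_of_adj hx hxy (by simp [hxv, hyv]))
  have mem₁ {j : ZMod n} (hj : σ j ∈ T.branch w₁ v) : j ∈ cyclicItv s l₁ := h₁ ▸ hj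
  have mem₂ {j : ZMod n} (hj : σ j ∈ T.branch w₂ v) : j ∈ cyclicItv (s + (l₁ : ZMod n)) l₂ :=
    h₂ ▸ hj
  obtain ⟨i, ⟨rfl, rfl⟩ | ⟨rfl, rfl⟩⟩ := (H.adj_iff x y).mp ⟨h, hxy⟩
  · rw [add_one_eq_of_mem_cyclicItv hl (mem₁ hx) (mem₂ hy), sub_add_cancel]
  · exact absurd (mem₁ hx) (add_one_notMem_cyclicItv hl (mem₂ hy))

theorem branchEdges_subset (H : IsCubicHalinWith G T σ) (hv : v ∉ range σ) (hvp : T.Adj v p)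
    (hN : T.neighborSet v = {p, w₁, w₂}) (hw : w₁ ≠ w₂) (hw₁ : w₁ ≠ p) (hw₂ : w₂ ≠ p)
    {s : ZMod n} {l₁ l₂ : ℕ} (h₁ : σ ⁻¹' T.branch w₁ v = cyclicItv s l₁)
    (h₂ : σ ⁻¹' T.branch w₂ v = cyclicItv (s + (l₁ : ZMod n)) l₂) (hl : l₁ + l₂ < n) :
    G.branchEdges T v p ⊆ insert s(v, p) (insert s(σ (s + l₁ - 1), σ (s + l₁))
      (G.branchEdges T w₁ v ∪ G.branchEdges T w₂ v)) := by
  rintro e (rfl | ⟨he, hsub⟩)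
  · exact mem_insert _ _
  refine mem_insert_of_mem _ ?_
  induction e using Sym2.ind with
  | _ x y =>
  have inner {R : Set V} (hx : x ∈ R) (hy : y ∈ R) : ∀ u ∈ s(x, y), u ∈ R := fun u hu ↦
    (Sym2.mem_iff.mp hu).elim (· ▸ hx) (· ▸ hy)
  have hR := H.isTree.isAcyclic.branch_eq_insert_union hN hw₁ hw₂
  have hx := hR ▸ hsub x (Sym2.mem_mk_left x y)
  have hy := hR ▸ hsub y (Sym2.mem_mk_right x y)
  rcases hx with hxv | hx
  · subst x
    exact mem_insert_of_mem _ (H.mem_branchEdges_of_adj hv hvp hN (hsub y (by simp)) he)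
  rcases hy with hyv | hy
  · subst y
    rw [Sym2.eq_swap (a := x)]
    exact mem_insert_of_mem _ (H.mem_branchEdges_of_adj hv hvp hN (hsub x (by simp))
      (G.adj_symm he))
  rcases hx with hx | hx <;> rcases hy with hy | hy
  · exact mem_insert_of_mem _ (Or.inl (mem_insert_of_mem _ ⟨he, inner hx hy⟩))
  · exact H.eq_of_adj_of_mem_branch hN hw h₁ h₂ hl he hx hy ▸ mem_insert _ _
  · rw [Sym2.eq_swap (a := x), H.eq_of_adj_of_mem_branch hN hw h₁ h₂ hl (G.adj_symm he) hy hx]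
    exact mem_insert _ _
  · exact mem_insert_of_mem _ (Or.inr (mem_insert_of_mem _ ⟨he, inner hx hy⟩))

theorem exists_branchColoring_of_split (H : IsCubicHalinWith G T σ) (hv : v ∉ range σ)
    (hvp : T.Adj v p) (hN : T.neighborSet v = {p, w₁, w₂}) (hw : w₁ ≠ w₂) (hw₁ : w₁ ≠ p)
    (hw₂ : w₂ ≠ p) {s : ZMod n} {l₁ l₂ : ℕ} (h₁ : σ ⁻¹' T.branch w₁ v = cyclicItv s l₁)
    (h₂ : σ ⁻¹' T.branch w₂ v = cyclicItv (s + (l₁ : ZMod n)) l₂) (hl₁ : 0 < l₁) (hl₂ : 0 < l₂)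
    (hl : l₁ + l₂ < n) {a x y : α} (hax : a ≠ x) (hay : a ≠ y) (hxy : x ≠ y)
    {C₁ C₂ : Sym2 V → α}
    (hC₁ : IsBranchColoring (G.branchEdges T w₁ v) s(w₁, v) (σ s) (σ (s + l₁ - 1)) C₁ y x a)
    (hC₂ : IsBranchColoring (G.branchEdges T w₂ v) s(w₂, v) (σ (s + l₁)) (σ (s + l₁ + l₂ - 1))
      C₂ x a y) :
    ∃ C, IsBranchColoring (G.branchEdges T v p) s(v, p) (σ s) (σ (s + l₁ + l₂ - 1)) C a x y := by
  have hT := H.isTree.isAcyclic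
  obtain ⟨hw₁v, hw₂v⟩ := adj_of_neighborSet_eq hN
  have hp {w : V} (hwv : T.Adj w v) (hwp : w ≠ p) : p ∉ T.branch w v := fun h ↦
    hT.notMem_branch hvp (hT.branch_subset hwv hwp h)
  have mem₁ {j : ZMod n} (hj : j ∈ cyclicItv s l₁) : σ j ∈ T.branch w₁ v :=
    (h₁.symm ▸ hj : j ∈ σ ⁻¹' T.branch w₁ v)
  have mem₂ {j : ZMod n} (hj : j ∈ cyclicItv (s + (l₁ : ZMod n)) l₂) : σ j ∈ T.branch w₂ v :=
    (h₂.symm ▸ hj : j ∈ σ ⁻¹' T.branch w₂ v)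
  obtain ⟨C, hC⟩ := hC₁.join hax hay hxy (hT.isPendantAt_branchEdges hw₁v)
    (hT.isPendantAt_branchEdges hw₂v) (hT.disjoint_branch_of_ne hw₁v hw₂v hw) (hp hw₁v hw₁)
    (hp hw₂v hw₂) hvp.ne.symm (mem₁ (self_mem_cyclicItv hl₁))
    (mem₁ (add_sub_one_mem_cyclicItv hl₁)) (mem₂ (self_mem_cyclicItv hl₂))
    (mem₂ (add_sub_one_mem_cyclicItv hl₂)) hC₂
  exact ⟨C, hC.mono (H.branchEdges_subset hv hvp hN hw hw₁ hw₂ h₁ h₂ hl)⟩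

theorem exists_branchColoring [Finite V] (H : IsCubicHalinWith G T σ) {l : ℕ} :
    ∀ {v p : V} {s : ZMod n} {a x y : α}, a ≠ x → a ≠ y → x ≠ y → T.Adj v p →
      σ ⁻¹' T.branch v p = cyclicItv s l → l < n →
      ∃ C, IsBranchColoring (G.branchEdges T v p) s(v, p) (σ s) (σ (s + l - 1)) C a x y := by
  induction l using Nat.strong_induction_on with
  | _ l IH =>
  intro v p s a x y hax hay hxy hvp hL hl
  by_cases hv : v ∈ range σ
  · obtain ⟨i, rfl⟩ := hv
    rw [H.isTree.isAcyclic.branchEdges_eq_singleton (H.tree_neighborSet_eq hvp)]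
    exact ⟨_, isBranchColoring_singleton hax hay⟩
  obtain ⟨w₁, w₂, hw, hw₁, hw₂, hN⟩ :=
    exists_eq_insert_pair_of_ncard_eq_three (H.ncard_tree_neighborSet hv) hvp
  obtain ⟨hw₁v, hw₂v⟩ := adj_of_neighborSet_eq hN
  obtain ⟨l₁, l₂, hl₁, hl₂, rfl, h⟩ := H.exists_leaves_split hv hN hw hw₁ hw₂ hL hl
  rw [Nat.cast_add, ← add_assoc]
  rcases h with ⟨h₁, h₂⟩ | ⟨h₂, h₁⟩
  · obtain ⟨C₁, hC₁⟩ := IH l₁ (by omega) hxy.symm hay.symm hax.symm hw₁v h₁ (by omega)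
    obtain ⟨C₂, hC₂⟩ := IH l₂ (by omega) hax.symm hxy hay hw₂v h₂ (by omega)
    exact H.exists_branchColoring_of_split hv hvp hN hw hw₁ hw₂ h₁ h₂ hl₁ hl₂ hl hax hay hxy
      hC₁ hC₂
  · obtain ⟨C₁, hC₁⟩ := IH l₁ (by omega) hxy.symm hay.symm hax.symm hw₂v h₂ (by omega)
    obtain ⟨C₂, hC₂⟩ := IH l₂ (by omega) hax.symm hxy hay hw₁v h₁ (by omega)
    exact H.exists_branchColoring_of_split hv hvp (by rw [hN, pair_comm]) hw.symm hw₂ hw₁ h₂ h₁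
      hl₁ hl₂ hl hax hay hxy hC₁ hC₂

theorem edgeSet_subset (H : IsCubicHalinWith G T σ) {i : ZMod n}
    (hr : T.neighborSet (σ i) = {r}) :
    G.edgeSet ⊆
      insert s(σ i, σ (i + 1)) (insert s(σ (i - 1), σ i) (G.branchEdges T r (σ i))) := by
  have at_root {y : V} (h : G.Adj (σ i) y) :
      s(σ i, y) ∈
        insert s(σ i, σ (i + 1)) (insert s(σ (i - 1), σ i) (G.branchEdges T r (σ i))) := by
    by_cases hT : T.Adj (σ i) y
    · obtain rfl : y = r := (hr ▸ hT : y ∈ ({r} : Set V))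
      exact mem_insert_of_mem _ (mem_insert_of_mem _ (Sym2.eq_swap ▸ mem_insert _ _))
    obtain ⟨j, ⟨hj, rfl⟩ | ⟨rfl, hj⟩⟩ := (H.adj_iff _ _).mp ⟨h, hT⟩
    · obtain rfl := H.injective hj
      exact mem_insert _ _
    · obtain rfl : j = i - 1 := eq_sub_of_add_eq (H.injective hj).symm
      exact mem_insert_of_mem _ (Sym2.eq_swap ▸ mem_insert _ _)
  intro e he
  induction e using Sym2.ind with
  | _ x y =>
  by_cases hx : x = σ i
  · subst hx
    exact at_root he
  by_cases hy : y = σ i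
  · subst hy
    rw [Sym2.eq_swap (a := x)]
    exact at_root (G.adj_symm he)
  refine mem_insert_of_mem _ (mem_insert_of_mem _ (mem_insert_of_mem _ ⟨he, ?_⟩))
  rw [H.isTree.branch_eq_compl hr]
  intro u hu
  rcases Sym2.mem_iff.mp hu with rfl | rfl
  exacts [hx, hy]

theorem exists_isProperEdgeColoringOn [Finite V] (H : IsCubicHalinWith G T σ) {a x y : α}
    (hax : a ≠ x) (hay : a ≠ y) (hxy : x ≠ y) :
    ∃ C : Sym2 V → α, IsProperEdgeColoringOn G.edgeSet C := by
  have := H.neZero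
  obtain ⟨r, hr⟩ := H.exists_tree_neighborSet_eq 0
  have hr0 : T.Adj r (σ 0) := (hr ▸ mem_singleton r : r ∈ T.neighborSet (σ 0)).symm
  have hL : σ ⁻¹' T.branch r (σ 0) = cyclicItv (0 + 1) (n - 1) := by
    rw [H.isTree.branch_eq_compl hr, cyclicItv_add_one_eq_compl, preimage_compl, ← image_singleton,
      H.injective.preimage_image]
  obtain ⟨C₀, hC₀⟩ := H.exists_branchColoring hax hay hxy hr0 hL (Nat.sub_lt (NeZero.pos n) one_pos)
  rw [show (0 : ZMod n) + 1 + ((n - 1 : ℕ) : ZMod n) - 1 = 0 - 1 by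
    rw [Nat.cast_sub NeZero.one_le, natCast_self]; ring] at hC₀
  have hf : σ (0 + 1) ≠ r := fun h ↦ H.not_tree_adj_succ 0 (h ▸ hr0.symm)
  have hg : σ (0 - 1) ≠ r := fun h ↦
    H.not_tree_adj_succ (0 - 1) (by rw [sub_add_cancel, h]; exact hr0)
  have hfg : σ (0 + 1) ≠ σ (0 - 1) := fun h ↦ by
    have h2 : ((2 : ℕ) : ZMod n) = 0 := by
      have := H.injective h
      push_cast
      linear_combination this
    have := Nat.le_of_dvd two_pos ((natCast_eq_zero_iff 2 n).mp h2)
    have := H.three_le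
    omega
  obtain ⟨C, hC⟩ := hC₀.close hax hay hxy
    (H.isTree.isAcyclic.isPendantAt_branchEdges hr0).eq_of_mem hf hg hfg
  exact ⟨C, hC.mono (H.edgeSet_subset hr)⟩

end IsCubicHalinWith

end Halin

theorem halin_cubic_three_edge_colorable {V : Type*} [Fintype V] (G : SimpleGraph V)
    (hG : IsHalin G) (hreg : ∀ v : V, (G.neighborSet v).ncard = 3) :
    ∃ C : Sym2 V → Fin 3, IsProperEdgeColoring G C := by
  obtain ⟨T, n, σ, H⟩ := hG.exists_isCubicHalinWith hreg
  exact H.exists_isProperEdgeColoringOn (a := 0) (x := 1) (y := 2) (by decide) (by decide)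
    (by decide)
end

section
/- Consider the graph H with vertices w₀, w₁, w₂, w₃, w₄ and edges w₀w₁, w₀w₂, w₀w₃, w₁w₂, w₁w₃, w₁w₄, together with a list assignment L where |L(w₀w₁)| ≥ 5, |L(w₀w₂)|, |L(w₀w₃)|, |L(w₁w₂)|, |L(w₁w₃)| ≥ 3, and |L(w₁w₄)| ≥ 2. Then H has a proper edge colouring from the lists. -/
/-- The graph with vertices `w₀ = 0, …, w₄ = 4` and edges
`w₀w₁, w₀w₂, w₀w₃, w₁w₂, w₁w₃, w₁w₄`. -/
def configGraphTW3 : SimpleGraph (Fin 5) :=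
  SimpleGraph.fromEdgeSet {s(0, 1), s(0, 2), s(0, 3), s(1, 2), s(1, 3), s(1, 4)}

/-!
Colour the edge `w₀w₁`, which meets all five other edges, last: it needs the other edges to
use at most four colours of a fixed `5`-subset `A` of its list. If the list of `w₀w₃` or of
`w₁w₂` leaves `A`, give that edge a colour outside `A` and colour the rest greedily. Otherwise
both lists lie in `A`, so by pigeonhole they share a colour, which the non-adjacent edges
`w₀w₃` and `w₁w₂` can both take.
-/

open Finset

namespace Finset

variable {α : Type*} [DecidableEq α] {s : Finset α}

theorem exists_mem_ne_ne (hs : 2 < #s) (x y : α) : ∃ z ∈ s, z ≠ x ∧ z ≠ y := by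
  obtain ⟨z, hz, hxy⟩ := exists_mem_notMem_of_card_lt_card (card_le_two.trans_lt hs)
  exact ⟨z, hz, by simpa [not_or] using hxy⟩

theorem exists_mem_ne_ne_ne_ne (hs : 4 < #s) (w x y z : α) :
    ∃ v ∈ s, v ≠ w ∧ v ≠ x ∧ v ≠ y ∧ v ≠ z := by
  obtain ⟨v, hv, hwxyz⟩ := exists_mem_notMem_of_card_lt_card (card_le_four.trans_lt hs)
  exact ⟨v, hv, by simpa [not_or] using hwxyz⟩

end Finset

section ListColourableConfig

variable {α : Type*}

/-- `A, B, C, D, E, F` are the lists of `w₀w₁, w₀w₂, w₀w₃, w₁w₂, w₁w₃, w₁w₄`; the eleven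
inequalities are the pairs of these edges that share an endpoint. -/
def ListColourableConfig (A B C D E F : Finset α) : Prop :=
  ∃ a ∈ A, ∃ b ∈ B, ∃ c ∈ C, ∃ d ∈ D, ∃ e ∈ E, ∃ f ∈ F,
    a ≠ b ∧ a ≠ c ∧ a ≠ d ∧ a ≠ e ∧ a ≠ f ∧ b ≠ c ∧ b ≠ d ∧ c ≠ e ∧ d ≠ e ∧ d ≠ f ∧ e ≠ f

variable {A A' B C D E F : Finset α}

theorem ListColourableConfig.mono_left (hA : A' ⊆ A) :
    ListColourableConfig A' B C D E F → ListColourableConfig A B C D E F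
  | ⟨a, ha, rest⟩ => ⟨a, hA ha, rest⟩

variable [DecidableEq α]

theorem listColourableConfig_of_not_subset₀₃ (hA : 4 < #A) (hB : 2 < #B) (hD : 2 < #D)
    (hE : 2 < #E) (hF : F.Nonempty) (hCA : ¬C ⊆ A) : ListColourableConfig A B C D E F := by
  obtain ⟨c, hc, hcA⟩ := not_subset.mp hCA
  obtain ⟨f, hf⟩ := hF
  obtain ⟨e, he, hec, hef⟩ := exists_mem_ne_ne hE c f
  obtain ⟨d, hd, hde, hdf⟩ := exists_mem_ne_ne hD e f
  obtain ⟨b, hb, hbc, hbd⟩ := exists_mem_ne_ne hB c d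
  obtain ⟨a, ha, hab, had, hae, haf⟩ := exists_mem_ne_ne_ne_ne hA b d e f
  have hac : a ≠ c := fun h => hcA (h ▸ ha)
  exact ⟨a, ha, b, hb, c, hc, d, hd, e, he, f, hf,
    hab, hac, had, hae, haf, hbc, hbd, hec.symm, hde, hdf, hef⟩

theorem listColourableConfig_of_not_subset₁₂ (hA : 4 < #A) (hB : 2 < #B) (hC : 1 < #C)
    (hE : 2 < #E) (hF : 1 < #F) (hDA : ¬D ⊆ A) : ListColourableConfig A B C D E F := by
  obtain ⟨d, hd, hdA⟩ := not_subset.mp hDA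
  obtain ⟨f, hf, hfd⟩ := exists_mem_ne hF d
  obtain ⟨e, he, hed, hef⟩ := exists_mem_ne_ne hE d f
  obtain ⟨c, hc, hce⟩ := exists_mem_ne hC e
  obtain ⟨b, hb, hbc, hbd⟩ := exists_mem_ne_ne hB c d
  obtain ⟨a, ha, hab, hac, hae, haf⟩ := exists_mem_ne_ne_ne_ne hA b c e f
  have had : a ≠ d := fun h => hdA (h ▸ ha)
  exact ⟨a, ha, b, hb, c, hc, d, hd, e, he, f, hf,
    hab, hac, had, hae, haf, hbc, hbd, hce, hed.symm, hfd.symm, hef⟩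

theorem listColourableConfig_of_inter_nonempty (hA : 4 < #A) (hB : 1 < #B) (hE : 2 < #E)
    (hF : 1 < #F) (hCD : (C ∩ D).Nonempty) : ListColourableConfig A B C D E F := by
  obtain ⟨t, htCD⟩ := hCD
  obtain ⟨htC, htD⟩ := mem_inter.mp htCD
  obtain ⟨f, hf, hft⟩ := exists_mem_ne hF t
  obtain ⟨e, he, het, hef⟩ := exists_mem_ne_ne hE t f
  obtain ⟨b, hb, hbt⟩ := exists_mem_ne hB t
  obtain ⟨a, ha, hat, hab, hae, haf⟩ := exists_mem_ne_ne_ne_ne hA t b e f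
  exact ⟨a, ha, b, hb, t, htC, t, htD, e, he, f, hf,
    hab, hat, hat, hae, haf, hbt, hbt, het.symm, het.symm, hft.symm, hef⟩

theorem listColourableConfig_of_card (hA : 4 < #A) (hB : 2 < #B) (hC : 2 < #C) (hD : 2 < #D)
    (hE : 2 < #E) (hF : 1 < #F) : ListColourableConfig A B C D E F := by
  obtain ⟨A', hA'A, hA'⟩ := exists_subset_card_eq hA
  refine .mono_left hA'A ?_
  by_cases hCA' : C ⊆ A'
  swap
  · exact listColourableConfig_of_not_subset₀₃ (by omega) hB hD hE (card_pos.mp (by omega)) hCA'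
  by_cases hDA' : D ⊆ A'
  swap
  · exact listColourableConfig_of_not_subset₁₂ (by omega) hB (by omega) hE hF hDA'
  exact listColourableConfig_of_inter_nonempty (by omega) (by omega) hE hF
    (inter_nonempty_of_card_lt_card_add_card hCA' hDA' (by omega))

end ListColourableConfig

theorem eq_of_mem_edgeSet_configGraphTW3 {x : Sym2 (Fin 5)} (hx : x ∈ configGraphTW3.edgeSet) :
    x = s(0, 1) ∨ x = s(0, 2) ∨ x = s(0, 3) ∨ x = s(1, 2) ∨ x = s(1, 3) ∨ x = s(1, 4) := by
  rw [configGraphTW3, SimpleGraph.edgeSet_fromEdgeSet] at hx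
  simpa using hx.1

theorem exists_isListEdgeColoring_configGraphTW3 {L : Sym2 (Fin 5) → Finset ℕ}
    (h : ListColourableConfig (L s(0, 1)) (L s(0, 2)) (L s(0, 3)) (L s(1, 2)) (L s(1, 3))
      (L s(1, 4))) :
    ∃ C, IsListEdgeColoring configGraphTW3 L C := by
  obtain ⟨a, ha, b, hb, c, hc, d, hd, e, he, f, hf,
    hab, hac, had, hae, haf, hbc, hbd, hce, hde, hdf, hef⟩ := h
  refine ⟨fun x => if x = s(0, 1) then a else if x = s(0, 2) then b else if x = s(0, 3) then c
      else if x = s(1, 2) then d else if x = s(1, 3) then e else f, ?_, ?_⟩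
  · intro x hx
    rcases eq_of_mem_edgeSet_configGraphTW3 hx with rfl | rfl | rfl | rfl | rfl | rfl <;>
      simpa
  · intro x hx y hy hxy hshare
    rcases eq_of_mem_edgeSet_configGraphTW3 hx with rfl | rfl | rfl | rfl | rfl | rfl <;>
      rcases eq_of_mem_edgeSet_configGraphTW3 hy with rfl | rfl | rfl | rfl | rfl | rfl <;>
      first
        | exact absurd rfl hxy
        | exact absurd hshare (by decide)
        | (simp only [reduceIte]; first | assumption | exact Ne.symm ‹_›)

/-- The configuration arising in the proof that tree-width-3 graphs are
`(Δ+1)`-edge-choosable: if `|L(w₀w₁)| ≥ 5`, the lists of `w₀w₂, w₀w₃, w₁w₂, w₁w₃` have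
size at least 3 and `|L(w₁w₄)| ≥ 2`, then the graph has an edge colouring from the
lists. -/
theorem config_tw3_list_edge_coloring (L : Sym2 (Fin 5) → Finset ℕ)
    (h01 : 5 ≤ (L s(0, 1)).card)
    (h02 : 3 ≤ (L s(0, 2)).card) (h03 : 3 ≤ (L s(0, 3)).card)
    (h12 : 3 ≤ (L s(1, 2)).card) (h13 : 3 ≤ (L s(1, 3)).card)
    (h14 : 2 ≤ (L s(1, 4)).card) :
    ∃ C, IsListEdgeColoring configGraphTW3 L C := by
  exact exists_isListEdgeColoring_configGraphTW3
    (listColourableConfig_of_card h01 h02 h03 h12 h13 h14)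
end
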